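/- Let N, N_S, P be positive naturals with P ∣ N_S and N_S ∣ N, and define α, β as in the full SmartOTPs scheme (α(i) = P - ⌊((i % N_S)·P)/N_S⌋ - 1, β(i) = ⌊i/N_S⌋·(N_S/P) + (i % (N_S/P))). Then the map i ↦ (α(i), β(i)) is injective on {0, 1, ..., N-1}. -/

import Mathlib

/-!
Write `N_S = P * Q`. Then `⌊(i % N_S) * P / N_S⌋ = (i / Q) % P`, so `α(i)` reads off (reversed) the
middle digit of `i` in the mixed radix `(Q, P, ∞)`, while `β(i) = (i / N_S) * Q + i % Q` packs the
top and bottom digits in a way from which both can be recovered. The three digits determine `i`.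
-/

namespace Nat

theorem mod_mul_mul_div_mul {P : ℕ} (Q m : ℕ) (hP : 0 < P) : m % (P * Q) * P / (P * Q) = m / Q % P := by
  rw [mul_comm _ P, Nat.mul_div_mul_left _ _ hP, Nat.mod_mul_left_div_self]

theorem eq_and_mod_eq_of_mul_add_mod_eq {Q a b m n : ℕ} (hQ : 0 < Q)
    (h : a * Q + m % Q = b * Q + n % Q) : a = b ∧ m % Q = n % Q := by
  have digits (c k : ℕ) : (c * Q + k % Q) / Q = c ∧ (c * Q + k % Q) % Q = k % Q :=
    (Nat.div_mod_unique hQ).2 ⟨by ring, Nat.mod_lt _ hQ⟩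
  obtain ⟨hdiv_a, hmod_m⟩ := digits a m
  obtain ⟨hdiv_b, hmod_n⟩ := digits b n
  exact ⟨hdiv_a.symm.trans (h ▸ hdiv_b), hmod_m.symm.trans (h ▸ hmod_n)⟩

theorem eq_of_mod_eq_of_div_mod_eq_of_div_mul_eq {P Q i j : ℕ} (hlow : i % Q = j % Q)
    (hmid : i / Q % P = j / Q % P) (hhigh : i / (P * Q) = j / (P * Q)) : i = j := by
  refine Nat.ext_div_modEq (n := Q) (Nat.ext_div_modEq (n := P) ?_ hmid) hlow
  rwa [Nat.div_div_eq_div_mul, Nat.div_div_eq_div_mul, mul_comm Q]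

end Nat

theorem alpha_beta_injOn_general (N NS P : ℕ) (hNS : 0 < NS)
    (hPd : P ∣ NS) :
    Set.InjOn
      (fun i => (P - (i % NS) * P / NS - 1, i / NS * (NS / P) + i % (NS / P)))
      (Set.Iio N) := by
  obtain ⟨Q, rfl⟩ := hPd
  obtain ⟨hP, hQ⟩ := CanonicallyOrderedAdd.mul_pos.1 hNS
  refine Function.Injective.injOn fun i j h => ?_
  simp only [Prod.mk.injEq, Nat.mul_div_cancel_left _ hP, Nat.mod_mul_mul_div_mul Q _ hP] at h
  obtain ⟨hα, hβ⟩ := h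
  have hmid : i / Q % P = j / Q % P := by
    have := Nat.mod_lt (i / Q) hP
    have := Nat.mod_lt (j / Q) hP
    omega
  obtain ⟨hhigh, hlow⟩ := Nat.eq_and_mod_eq_of_mul_add_mod_eq hQ hβ
  exact Nat.eq_of_mod_eq_of_div_mod_eq_of_div_mul_eq hlow hmid hhigh

/-- The map `i ↦ (α(i), β(i))` of the full SmartOTPs scheme, with
`α(i) = P - ⌊((i % N_S)·P)/N_S⌋ - 1` and
`β(i) = ⌊i/N_S⌋·(N_S/P) + (i % (N_S/P))`, is injective on `{0, …, N-1}`. -/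
theorem alpha_beta_injOn (N NS P : ℕ) (hN : 0 < N) (hNS : 0 < NS) (hP : 0 < P)
    (hPd : P ∣ NS) (hNSd : NS ∣ N) :
    Set.InjOn
      (fun i => (P - (i % NS) * P / NS - 1, i / NS * (NS / P) + i % (NS / P)))
      (Set.Iio N) :=
  alpha_beta_injOn_general N NS P hNS hPd
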